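/- Let N ≥ 2, let b : Fin N → Fin N → ℝ be weighted infection rates and δ : Fin N → ℝ be curing rates. Define, for an SIR configuration x : Fin N → Fin 3, the eigenvalue λ(x) = −∑_{k} ∑_{l} b k l · [x k = 1 and x l = 0] − ∑_{k} δ k · [x k = 1]. Suppose k ≠ l are nodes with b k l = 0 (a missing link from k to l) and δ k > 0 with b k j ≥ 0 for all j. Let x be the configuration with x k = 1 and x j = 0 for all j ≠ k, and let y be the configuration with y k = 1, y l = 2, and y j = 0 for all j ∉ {k, l}. Then x ≠ y, λ(x) = λ(y), and λ(x) < 0. In particular, the map x ↦ λ(x) is not injective on configurations with nonzero eigenvalue, i.e. the SIR infinitesimal generator on a non-complete contact graph has a degenerate nonzero eigenvalue. -/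
import Mathlib


/-- The eigenvalue of the SIR infinitesimal generator belonging to the
configuration `x`: minus the total weight of links from infected to susceptible
nodes (the S–I cut) minus the total curing rate of the infected nodes. -/
noncomputable def SIReig {N : ℕ} (b : Fin N → Fin N → ℝ) (δ : Fin N → ℝ)
    (x : Fin N → Fin 3) : ℝ :=
  -(∑ k, ∑ l, if x k = 1 ∧ x l = 0 then b k l else 0) -
    ∑ k, if x k = 1 then δ k else 0

/-- for a non-complete contact graph (a missing link from `k` to
`l`), the SIR generator has a degenerate nonzero eigenvalue: the configuration
`x` with only node `k` infected and the configuration `y` with node `k`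
infected and node `l` recovered are distinct, have equal eigenvalues, and their
common eigenvalue is negative. -/
theorem stmt19 (N : ℕ) (hN : 2 ≤ N) (b : Fin N → Fin N → ℝ) (δ : Fin N → ℝ)
    (k l : Fin N) (hkl : k ≠ l) (hb0 : b k l = 0) (hδ : 0 < δ k)
    (hbk : ∀ j : Fin N, 0 ≤ b k j)
    (x y : Fin N → Fin 3)
    (hx : x = fun j => if j = k then 1 else 0)
    (hy : y = fun j => if j = k then 1 else if j = l then 2 else 0) :
    x ≠ y ∧ SIReig b δ x = SIReig b δ y ∧ SIReig b δ x < 0 := by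
  subst hx; subst hy
  have hlk : l ≠ k := hkl.symm
  have h1 : SIReig b δ (fun j => if j = k then 1 else 0)
      = -(∑ j, if j = k then 0 else b k j) - δ k := by
    unfold SIReig
    congr 1
    · congr 1
      rw [Finset.sum_eq_single k]
      · apply Finset.sum_congr rfl
        intro j _
        by_cases hj : j = k <;> simp [hj]
      · intro j _ hj
        simp [hj]
      · simp
    · rw [Finset.sum_eq_single k]
      · simp
      · intro j _ hj
        simp [hj]
      · simp
  have h2 : SIReig b δ (fun j => if j = k then 1 else if j = l then 2 else 0)
      = -(∑ j, if j = k ∨ j = l then 0 else b k j) - δ k := by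
    unfold SIReig
    congr 1
    · congr 1
      rw [Finset.sum_eq_single k]
      · apply Finset.sum_congr rfl
        intro j _
        by_cases hj : j = k <;> by_cases hjl : j = l <;> simp [hj, hjl, hkl, hlk]
      · intro j _ hj
        by_cases hjl : j = l <;> simp [hj, hjl, hlk]
      · simp
    · rw [Finset.sum_eq_single k]
      · simp [hkl]
      · intro j _ hj
        by_cases hjl : j = l <;> simp [hj, hjl, hlk]
      · simp
  refine ⟨?_, ?_, ?_⟩
  · intro h
    have := congrFun h l
    simp [hlk] at this
  · rw [h1, h2]
    congr 2
    apply Finset.sum_congr rfl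
    intro j _
    by_cases hj : j = k
    · simp [hj]
    · by_cases hjl : j = l <;> simp [hj, hjl, hb0]
  · rw [h1]
    have : (0:ℝ) ≤ ∑ j, if j = k then 0 else b k j := by
      apply Finset.sum_nonneg
      intro j _
      split <;> [rfl; exact hbk j]
    linarith
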